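/- arXiv:1907.10666 — 2 statements merged into one kernel-verified Lean document; each statement's English description precedes it below -/
import Mathlib

section
/- Let E ⊆ ℤ^r (r ≥ 2) satisfy properties (A) and (C), let α⁰ = min E, and let α ∈ ℤ^r with α_r = α⁰_r and α_i ≥ α⁰_i for all i. Let I′ = {1,…,r−1} and fix i ∈ I′. Then the closed fiber F̄_i(E, α) is nonempty if and only if the closed fiber F̄_i(pr_{I′}(E), pr_{I′}(α)) is nonempty. -/
namespace Colength

/-- The fiber `F_J(E, α)`: elements of `E` agreeing with `α` on `J` and strictly
larger outside `J`. -/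
def Fiber {ι : Type*} (E : Set (ι → ℤ)) (J : Finset ι) (α : ι → ℤ) : Set (ι → ℤ) :=
  {β | β ∈ E ∧ (∀ j ∈ J, β j = α j) ∧ (∀ i ∉ J, α i < β i)}

/-- The closed fiber `F̄_i(E, α)`. -/
def ClFiber {ι : Type*} (E : Set (ι → ℤ)) (i : ι) (α : ι → ℤ) : Set (ι → ℤ) :=
  {β | β ∈ E ∧ β i = α i ∧ ∀ j, j ≠ i → α j ≤ β j}

/-- `α` is a maximal point of `E`: the fiber `F(E,α) = ⋃ᵢ F_{i}(E,α)` is empty. -/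
def IsMaximalPt {ι : Type*} [DecidableEq ι] (E : Set (ι → ℤ)) (α : ι → ℤ) : Prop :=
  α ∈ E ∧ ∀ i : ι, Fiber E {i} α = ∅

/-- `α` is a relative maximal of `E`. -/
def IsRelMax {ι : Type*} [DecidableEq ι] (E : Set (ι → ℤ)) (α : ι → ℤ) : Prop :=
  IsMaximalPt E α ∧ ∀ J : Finset ι, 2 ≤ J.card → Fiber E J α ≠ ∅

/-- `α` is an absolute maximal of `E`. -/
def IsAbsMax {ι : Type*} [Fintype ι] (E : Set (ι → ℤ)) (α : ι → ℤ) : Prop :=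
  α ∈ E ∧ ∀ J : Finset ι, J ≠ ∅ → J ≠ Finset.univ → Fiber E J α = ∅

/-- Property (A): closure under componentwise minimum. -/
def PropA {ι : Type*} (E : Set (ι → ℤ)) : Prop :=
  ∀ α ∈ E, ∀ β ∈ E, (fun i => min (α i) (β i)) ∈ E

/-- Property (B): the exchange property. -/
def PropB {ι : Type*} (E : Set (ι → ℤ)) : Prop :=
  ∀ α ∈ E, ∀ β ∈ E, α ≠ β → ∀ i, α i = β i →
    ∃ γ ∈ E, α i < γ i ∧ ∀ j, j ≠ i →
      min (α j) (β j) ≤ γ j ∧ (α j ≠ β j → γ j = min (α j) (β j))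

/-- Property (C): `E` is bounded below and contains `c + ℕ^r` for some `c ∈ ℕ^r`. -/
def PropC {ι : Type*} (E : Set (ι → ℤ)) : Prop :=
  (∃ a : ι → ℤ, ∀ β ∈ E, a ≤ β) ∧
  (∃ c : ι → ℤ, 0 ≤ c ∧ ∀ x : ι → ℤ, c ≤ x → x ∈ E)

/-- `c` is the conductor of `E`: the least element with `c + ℕ^r ⊆ E`. -/
def IsConductor {ι : Type*} (E : Set (ι → ℤ)) (c : ι → ℤ) : Prop :=
  (∀ x : ι → ℤ, c ≤ x → x ∈ E) ∧ ∀ γ : ι → ℤ, (∀ x : ι → ℤ, γ ≤ x → x ∈ E) → c ≤ γ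

/-- Projection to coordinates `{1,3}` (indices `0` and `2`) for `r = 3`. -/
def pr13 (x : Fin 3 → ℤ) : Fin 2 → ℤ := ![x 0, x 2]

/-- Projection to coordinates `{2,3}` (indices `1` and `2`) for `r = 3`. -/
def pr23 (x : Fin 3 → ℤ) : Fin 2 → ℤ := ![x 1, x 2]

end Colength

open Colength in
/-- Lemma 9: for `α` with last coordinate equal to that of the
minimum of `E` and `α ≥ min E`, the closed fiber `F̄_i(E, α)` is nonempty iff the
closed fiber of the projection dropping the last coordinate is nonempty. -/
theorem closed_fiber_iff_projection {n : ℕ} (hn : 1 ≤ n)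
    (E : Set (Fin (n + 1) → ℤ)) (hA : PropA E) (hC : PropC E)
    (α0 : Fin (n + 1) → ℤ) (hmin : α0 ∈ E ∧ ∀ β ∈ E, α0 ≤ β)
    (α : Fin (n + 1) → ℤ) (hlast : α (Fin.last n) = α0 (Fin.last n))
    (hge : α0 ≤ α) (i : Fin n) :
    (ClFiber E i.castSucc α).Nonempty ↔
      (ClFiber ((fun (x : Fin (n + 1) → ℤ) (k : Fin n) => x k.castSucc) '' E) i
        (fun k : Fin n => α k.castSucc)).Nonempty := by
  constructor
  · rintro ⟨β, hβE, hβi, hβj⟩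
    refine ⟨fun k => β k.castSucc, ⟨β, hβE, rfl⟩, hβi, fun j hj => ?_⟩
    exact hβj j.castSucc (fun h => hj (Fin.castSucc_injective n h))
  · rintro ⟨_, ⟨β, hβE, rfl⟩, hβi, hβj⟩
    refine ⟨β, hβE, hβi, fun j hj => ?_⟩
    refine Fin.lastCases ?_ (fun k => ?_) j hj
    · intro _
      rw [hlast]
      exact hmin.2 β hβE (Fin.last n)
    · intro hk
      exact hβj k (fun h => hk (by rw [h]))
end

section
/- Let E ⊆ ℤ^r satisfy properties (A), (B), (C), fix j ∈ I, and let α ∈ ℤ^r. If F̄_j(E,α) = ∅, then either α_j ∉ pr_j(E) while α_j > min(pr_j(E)), or there exist a subset J ⊆ I with {j} ⊊ J and a relative maximal β of E_J = pr_J(E) such that β_j = α_j and β_i < α_i for all i ∈ J with i ≠ j. -/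
open Colength in
private lemma inf'_mem_aux {r : ℕ} {E : Set (Fin r → ℤ)} (hA : PropA E)
    {ι' : Type*} (f : ι' → (Fin r → ℤ)) :
    ∀ (s : Finset ι') (hs : s.Nonempty), (∀ t ∈ s, f t ∈ E) → s.inf' hs f ∈ E := by
  intro s
  induction s using Finset.cons_induction with
  | empty => intro hs; exact absurd hs (by simp)
  | cons a s ha ih =>
    intro hs hf
    rcases s.eq_empty_or_nonempty with rfl | hsne
    · simpa using hf a (by simp)
    · rw [Finset.inf'_cons hsne]
      have hmem := hA (f a) (hf a (by simp)) (s.inf' hsne f)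
        (ih hsne (fun t ht => hf t (Finset.mem_cons_of_mem ht)))
      have heq : f a ⊓ s.inf' hsne f = fun i => min (f a i) (s.inf' hsne f i) := by
        funext i; simp [Pi.inf_apply]
      rw [heq]; exact hmem

open Colength in
/-- Lemma 10, forward direction: if `F̄_j(E,α) = ∅`, then either
`α_j` is a gap of the projection `pr_j(E)` above its minimum, or some projection
`E_J` (with `{j} ⊊ J`) has a relative maximal `β` with `β_j = α_j` and
`β_i < α_i` for all `i ∈ J`, `i ≠ j`. -/
theorem empty_closed_fiber_characterization {r : ℕ} (E : Set (Fin r → ℤ))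
    (hA : PropA E) (hB : PropB E) (hC : PropC E)
    (m : Fin r → ℤ) (hm : m ∈ E ∧ ∀ β ∈ E, m ≤ β)
    (j : Fin r) (α : Fin r → ℤ) (hα : m ≤ α)
    (h : ClFiber E j α = ∅) :
    (α j ∉ (fun x : Fin r → ℤ => x j) '' E ∧ m j < α j) ∨
    ∃ J : Finset (Fin r), ∃ hJ : ({j} : Finset (Fin r)) ⊂ J,
      ∃ β : {x // x ∈ J} → ℤ,
        IsRelMax ((fun (x : Fin r → ℤ) (k : {y // y ∈ J}) => x k.1) '' E) β ∧
        β ⟨j, Finset.singleton_subset_iff.mp hJ.subset⟩ = α j ∧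
        ∀ i : Fin r, ∀ hi : i ∈ J, i ≠ j → β ⟨i, hi⟩ < α i := by
  classical
  obtain ⟨hmE, hmle⟩ := hm
  by_cases hin : α j ∈ (fun x : Fin r → ℤ => x j) '' E
  swap
  · exact Or.inl ⟨hin, lt_of_le_of_ne (hα j) (fun hEq => hin ⟨m, hmE, hEq⟩)⟩
  right
  obtain ⟨x₀, hx₀E, hx₀j⟩ := hin
  simp only [] at hx₀j
  -- minimize α' with the same properties
  set P : (Fin r → ℤ) → Prop := fun a' =>
    a' j = α j ∧ m ≤ a' ∧ a' ≤ α ∧ ClFiber E j a' = ∅ with hPdef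
  set N : (Fin r → ℤ) → ℕ := fun a' => ∑ i, (a' i - m i).toNat with hNdef
  have hPα : P α := ⟨rfl, hα, le_refl _, h⟩
  have hSne : ∃ n : ℕ, ∃ a', P a' ∧ N a' = n := ⟨N α, α, hPα, rfl⟩
  obtain ⟨αs, hPαs, hNαs⟩ := Nat.find_spec hSne
  obtain ⟨hαsj, hmαs, hαsα, hCF⟩ := hPαs
  have hmin : ∀ a', P a' → Nat.find hSne ≤ N a' := fun a' ha' =>
    Nat.find_le ⟨a', ha', rfl⟩
  -- basic consequence of emptiness of the closed fiber at αs
  have hCFc : ∀ y ∈ E, y j = α j → (∀ i, i ∈ Finset.univ.filter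
      (fun i => i ≠ j ∧ m i < αs i) → αs i ≤ y i) → False := by
    intro y hyE hyj hyge
    have hy : y ∈ ClFiber E j αs := by
      refine ⟨hyE, by rw [hyj, hαsj], ?_⟩
      intro i hij
      by_cases hiJ : i ∈ Finset.univ.filter (fun i => i ≠ j ∧ m i < αs i)
      · exact hyge i hiJ
      · have : ¬ (m i < αs i) := by
          intro hc
          exact hiJ (by simp [Finset.mem_filter, hij, hc])
        exact le_trans (not_lt.1 this) (hmle y hyE i)
    rw [hCF] at hy
    exact hy
  -- the family u
  have hexu : ∀ i₀, i₀ ∈ Finset.univ.filter (fun i => i ≠ j ∧ m i < αs i) →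
      ∃ v, v ∈ E ∧ v j = α j ∧ v i₀ = αs i₀ - 1 ∧
        ∀ i, i ≠ j → i ≠ i₀ → αs i ≤ v i := by
    intro i₀ hi₀
    rw [Finset.mem_filter] at hi₀
    obtain ⟨-, hi₀j, hi₀m⟩ := hi₀
    have hlower : (ClFiber E j (Function.update αs i₀ (αs i₀ - 1))).Nonempty := by
      by_contra hne
      rw [Set.not_nonempty_iff_eq_empty] at hne
      have hP' : P (Function.update αs i₀ (αs i₀ - 1)) := by
        refine ⟨?_, ?_, ?_, hne⟩
        · rw [Function.update_of_ne (Ne.symm hi₀j)]; exact hαsj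
        · intro i
          by_cases hii : i = i₀
          · subst hii; rw [Function.update_self]; linarith [hi₀m]
          · rw [Function.update_of_ne hii]; exact hmαs i
        · intro i
          by_cases hii : i = i₀
          · subst hii
            rw [Function.update_self]
            linarith [hαsα i]
          · rw [Function.update_of_ne hii]; exact hαsα i
      have hlt : N (Function.update αs i₀ (αs i₀ - 1)) < N αs := by
        rw [hNdef]
        apply Finset.sum_lt_sum
        · intro i _
          by_cases hii : i = i₀
          · subst hii
            rw [Function.update_self]
            exact Int.toNat_le_toNat (by omega)
          · rw [Function.update_of_ne hii]
        · refine ⟨i₀, Finset.mem_univ _, ?_⟩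
          rw [Function.update_self]
          exact (Int.toNat_lt_toNat (by linarith [hi₀m])).mpr (by linarith [hi₀m])
      have := hmin _ hP'
      omega
    obtain ⟨v, hvE, hvj, hvge⟩ := hlower
    have hv1 : v j = α j := by
      rw [hvj, Function.update_of_ne (Ne.symm hi₀j)]; exact hαsj
    have hv3 : ∀ i, i ≠ j → i ≠ i₀ → αs i ≤ v i := by
      intro i hij hii
      have := hvge i hij
      rwa [Function.update_of_ne hii] at this
    have hv2' : αs i₀ - 1 ≤ v i₀ := by
      have := hvge i₀ hi₀j
      rwa [Function.update_self] at this
    have hv2 : v i₀ = αs i₀ - 1 := by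
      by_contra hne2
      apply hCFc v hvE hv1
      intro i hiJ
      rw [Finset.mem_filter] at hiJ
      by_cases hii : i = i₀
      · subst hii; omega
      · exact hv3 i hiJ.2.1 hii
    exact ⟨v, hvE, hv1, hv2, hv3⟩
  choose! u hu using hexu
  set Js : Finset (Fin r) := Finset.univ.filter (fun i => i ≠ j ∧ m i < αs i) with hJsdef
  have huE : ∀ i₀ ∈ Js, u i₀ ∈ E := fun i₀ h' => (hu i₀ h').1
  have huj : ∀ i₀ ∈ Js, u i₀ j = α j := fun i₀ h' => (hu i₀ h').2.1
  have hudiag : ∀ i₀ ∈ Js, u i₀ i₀ = αs i₀ - 1 := fun i₀ h' => (hu i₀ h').2.2.1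
  have huge : ∀ i₀ ∈ Js, ∀ i, i ≠ j → i ≠ i₀ → αs i ≤ u i₀ i :=
    fun i₀ h' => (hu i₀ h').2.2.2
  have hJsj : ∀ i ∈ Js, i ≠ j := by
    intro i hi; rw [hJsdef, Finset.mem_filter] at hi; exact hi.2.1
  -- Js is nonempty
  have hJsne : Js.Nonempty := by
    have : ∃ i, i ≠ j ∧ x₀ i < αs i := by
      by_contra hc
      push_neg at hc
      exact hCFc x₀ hx₀E hx₀j (fun i hiJ => hc i (hJsj i hiJ))
    obtain ⟨i₁, hi₁j, hi₁lt⟩ := this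
    refine ⟨i₁, ?_⟩
    rw [hJsdef, Finset.mem_filter]
    exact ⟨Finset.mem_univ _, hi₁j, lt_of_le_of_lt (hmle x₀ hx₀E i₁) hi₁lt⟩
  -- evaluation of infima of u-families
  have hinf_j : ∀ (M : Finset (Fin r)) (hM : M.Nonempty), M ⊆ Js →
      (M.inf' hM u) j = α j := by
    intro M hM hMJs
    rw [Finset.inf'_apply]
    apply le_antisymm
    · obtain ⟨t, ht⟩ := hM
      exact le_trans (Finset.inf'_le _ ht) (le_of_eq (huj t (hMJs ht)))
    · exact Finset.le_inf' _ _ (fun t ht => le_of_eq (huj t (hMJs ht)).symm)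
  have hinf_diag : ∀ (M : Finset (Fin r)) (hM : M.Nonempty), M ⊆ Js →
      ∀ k ∈ M, (M.inf' hM u) k = αs k - 1 := by
    intro M hM hMJs k hk
    rw [Finset.inf'_apply]
    apply le_antisymm
    · exact le_trans (Finset.inf'_le _ hk) (le_of_eq (hudiag k (hMJs hk)))
    · apply Finset.le_inf'
      intro t ht
      by_cases htk : t = k
      · subst htk; exact le_of_eq (hudiag t (hMJs ht)).symm
      · have := huge t (hMJs ht) k (hJsj k (hMJs hk)) (Ne.symm htk)
        omega
  have hinf_ge : ∀ (M : Finset (Fin r)) (hM : M.Nonempty), M ⊆ Js →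
      ∀ i, i ≠ j → i ∉ M → αs i ≤ (M.inf' hM u) i := by
    intro M hM hMJs i hij hiM
    rw [Finset.inf'_apply]
    apply Finset.le_inf'
    intro t ht
    exact huge t (hMJs ht) i hij (fun hc => hiM (by rw [hc]; exact ht))
  clear hmin hNαs hPα hSne
  set J : Finset (Fin r) := insert j Js with hJdef
  have hjJ : j ∈ J := Finset.mem_insert_self _ _
  have hmemJs : ∀ t : {x // x ∈ J}, t.1 ≠ j → t.1 ∈ Js := by
    intro t ht
    rcases Finset.mem_insert.1 t.2 with h' | h'
    · exact absurd h' ht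
    · exact h'
  have hJsJ : Js ⊆ J := Finset.subset_insert _ _
  have hJsne' := hJsne
  obtain ⟨i₁, hi₁⟩ := hJsne'
  have hssub : ({j} : Finset (Fin r)) ⊂ J := by
    rw [Finset.ssubset_iff_of_subset (Finset.singleton_subset_iff.2 hjJ)]
    exact ⟨i₁, hJsJ hi₁, by rw [Finset.mem_singleton]; exact hJsj i₁ hi₁⟩
  set xs : Fin r → ℤ := Js.inf' hJsne u with hxsdef
  have hxsE : xs ∈ E := inf'_mem_aux hA u Js hJsne huE
  have hxsj : xs j = α j := hinf_j Js hJsne (Finset.Subset.refl _)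
  have hxsd : ∀ k ∈ Js, xs k = αs k - 1 :=
    hinf_diag Js hJsne (Finset.Subset.refl _)
  -- the maximal point property
  have hmax : ∀ i : {x // x ∈ J},
      Fiber ((fun (x : Fin r → ℤ) (k : {y // y ∈ J}) => x k.1) '' E) {i}
        (fun k : {x // x ∈ J} => xs k.1) = ∅ := by
    intro i
    rw [Set.eq_empty_iff_forall_notMem]
    rintro g ⟨⟨y, hyE, rfl⟩, hgeq, hglt⟩
    have hgeq' : y i.1 = xs i.1 := hgeq i (Finset.mem_singleton_self i)
    by_cases hij : i.1 = j
    · -- the fiber at j : contradiction with emptiness of the closed fiber at αs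
      have hyj : y j = α j := by rw [← hij, hgeq', hij, hxsj]
      apply hCFc y hyE hyj
      intro k hkJs
      have hkj := hJsj k hkJs
      have hne : (⟨k, hJsJ hkJs⟩ : {x // x ∈ J}) ∉ ({i} : Finset {x // x ∈ J}) := by
        rw [Finset.mem_singleton]
        intro hc
        exact hkj (by rw [← hij]; exact congrArg Subtype.val hc)
      have h2 : xs k < y k := hglt _ hne
      have h3 := hxsd k hkJs
      omega
    · -- a fiber at k ∈ Js : use property (B)
      have hkJs : i.1 ∈ Js := hmemJs i hij
      have hyk : y i.1 = αs i.1 - 1 := by rw [hgeq', hxsd _ hkJs]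
      have hjne : (⟨j, hjJ⟩ : {x // x ∈ J}) ∉ ({i} : Finset {x // x ∈ J}) := by
        rw [Finset.mem_singleton]
        intro hc
        exact hij (congrArg Subtype.val hc).symm
      have hyj : α j < y j := by
        have h2 : xs j < y j := hglt _ hjne
        rwa [hxsj] at h2
      have hyge : ∀ k, k ∈ Js → k ≠ i.1 → αs k ≤ y k := by
        intro k hk hki
        have hne : (⟨k, hJsJ hk⟩ : {x // x ∈ J}) ∉ ({i} : Finset {x // x ∈ J}) := by
          rw [Finset.mem_singleton]
          intro hc
          exact hki (congrArg Subtype.val hc)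
        have h2 : xs k < y k := hglt _ hne
        have h3 := hxsd k hk
        omega
      have hune : u i.1 ≠ y := by
        intro hc
        have h2 := congrFun hc j
        rw [huj i.1 hkJs] at h2
        omega
      obtain ⟨γ, hγE, hγk, hγrest⟩ := hB (u i.1) (huE i.1 hkJs) y hyE hune i.1
        (by rw [hudiag i.1 hkJs, hyk])
      have hγj : γ j = α j := by
        have hjne2 : j ≠ i.1 := fun hc => hij hc.symm
        obtain ⟨-, heq⟩ := hγrest j hjne2
        have hd : u i.1 j ≠ y j := by rw [huj i.1 hkJs]; omega
        rw [heq hd, huj i.1 hkJs]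
        exact min_eq_left (le_of_lt hyj)
      apply hCFc γ hγE hγj
      intro k hk
      by_cases hki : k = i.1
      · rw [hki]
        have h2 := hγk
        rw [hudiag i.1 hkJs] at h2
        omega
      · have hkj := hJsj k hk
        obtain ⟨hmin2, -⟩ := hγrest k hki
        have h1 : αs k ≤ u i.1 k := huge i.1 hkJs k hkj hki
        have h2 : αs k ≤ y k := hyge k hk hki
        exact le_trans (le_min h1 h2) hmin2
  -- the relative maximality property
  have hrel : ∀ K : Finset {x // x ∈ J}, 2 ≤ K.card →
      Fiber ((fun (x : Fin r → ℤ) (k : {y // y ∈ J}) => x k.1) '' E) K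
        (fun k : {x // x ∈ J} => xs k.1) ≠ ∅ := by
    intro K hK
    apply Set.Nonempty.ne_empty
    have hKne : K.Nonempty := Finset.card_pos.1 (by omega)
    by_cases hjK : (⟨j, hjJ⟩ : {x // x ∈ J}) ∈ K
    · -- j ∈ K : take the infimum of the family over K \ {j}
      have hKe : (K.erase ⟨j, hjJ⟩).Nonempty := by
        rw [← Finset.card_pos, Finset.card_erase_of_mem hjK]; omega
      set M : Finset (Fin r) := (K.erase ⟨j, hjJ⟩).image Subtype.val with hMdef
      have hMne : M.Nonempty := hKe.image _
      have hMJs : M ⊆ Js := by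
        intro k hk
        rw [hMdef, Finset.mem_image] at hk
        obtain ⟨t, ht, rfl⟩ := hk
        exact hmemJs t (fun hc => (Finset.mem_erase.1 ht).1 (Subtype.ext hc))
      refine ⟨fun k => (M.inf' hMne u) k.1,
        ⟨M.inf' hMne u, inf'_mem_aux hA u M hMne (fun t ht => huE t (hMJs ht)), rfl⟩,
        ?_, ?_⟩
      · intro t htK
        by_cases htj : t = ⟨j, hjJ⟩
        · show (M.inf' hMne u) t.1 = xs t.1
          rw [htj]
          show (M.inf' hMne u) j = xs j
          rw [hinf_j M hMne hMJs, hxsj]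
        · have htM : t.1 ∈ M := by
            rw [hMdef, Finset.mem_image]
            exact ⟨t, Finset.mem_erase.2 ⟨htj, htK⟩, rfl⟩
          show (M.inf' hMne u) t.1 = xs t.1
          rw [hinf_diag M hMne hMJs t.1 htM, hxsd t.1 (hMJs htM)]
      · intro t htK
        have htj : t.1 ≠ j := by
          intro hc
          exact htK (by rw [show t = (⟨j, hjJ⟩ : {x // x ∈ J}) from Subtype.ext hc]; exact hjK)
        have htJs : t.1 ∈ Js := hmemJs t htj
        have htM : t.1 ∉ M := by
          rw [hMdef, Finset.mem_image]
          rintro ⟨s, hs, hseq⟩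
          exact htK (by rw [← Subtype.ext hseq]; exact Finset.mem_of_mem_erase hs)
        show xs t.1 < (M.inf' hMne u) t.1
        have h1 := hinf_ge M hMne hMJs t.1 htj htM
        have h2 := hxsd t.1 htJs
        omega
    · -- j ∉ K : use property (B) at coordinate j
      obtain ⟨k₁, hk₁⟩ := hKne
      have hall : ∀ t : {x // x ∈ J}, t ∈ K → t.1 ∈ Js := by
        intro t ht
        refine hmemJs t (fun hc => hjK ?_)
        rw [show (⟨j, hjJ⟩ : {x // x ∈ J}) = t from Subtype.ext hc.symm]
        exact ht
      have hKe : (K.erase k₁).Nonempty := by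
        rw [← Finset.card_pos, Finset.card_erase_of_mem hk₁]; omega
      set M : Finset (Fin r) := (K.erase k₁).image Subtype.val with hMdef
      have hMne : M.Nonempty := hKe.image _
      have hMJs : M ⊆ Js := by
        intro k hk
        rw [hMdef, Finset.mem_image] at hk
        obtain ⟨t, ht, rfl⟩ := hk
        exact hall t (Finset.mem_of_mem_erase ht)
      have hk₁Js : k₁.1 ∈ Js := hall k₁ hk₁
      have hk₁M : k₁.1 ∉ M := by
        rw [hMdef, Finset.mem_image]
        rintro ⟨t, ht, hteq⟩
        exact (Finset.mem_erase.1 ht).1 (Subtype.ext hteq)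
      set q : Fin r → ℤ := M.inf' hMne u with hqdef
      have hqE : q ∈ E := inf'_mem_aux hA u M hMne (fun t ht => huE t (hMJs ht))
      have hqk₁ : αs k₁.1 ≤ q k₁.1 := hinf_ge M hMne hMJs k₁.1 (hJsj _ hk₁Js) hk₁M
      have hpq : u k₁.1 ≠ q := by
        intro hc
        have h1 : u k₁.1 k₁.1 = αs k₁.1 - 1 := hudiag _ hk₁Js
        rw [hc] at h1
        omega
      obtain ⟨γ, hγE, hγj, hγrest⟩ := hB (u k₁.1) (huE _ hk₁Js) q hqE hpq j
        (by rw [huj _ hk₁Js, hqdef, hinf_j M hMne hMJs])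
      rw [huj _ hk₁Js] at hγj
      refine ⟨fun k => γ k.1, ⟨γ, hγE, rfl⟩, ?_, ?_⟩
      · intro t htK
        have htJs : t.1 ∈ Js := hall t htK
        have htj : t.1 ≠ j := hJsj _ htJs
        obtain ⟨-, heq⟩ := hγrest t.1 htj
        by_cases htk₁ : t = k₁
        · show γ t.1 = xs t.1
          rw [htk₁]
          have hd : u k₁.1 k₁.1 ≠ q k₁.1 := by
            rw [hudiag _ hk₁Js]; omega
          obtain ⟨-, heq₁⟩ := hγrest k₁.1 (hJsj _ hk₁Js)
          rw [heq₁ hd, hudiag _ hk₁Js, hxsd _ hk₁Js]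
          exact min_eq_left (by omega)
        · have htM : t.1 ∈ M := by
            rw [hMdef, Finset.mem_image]
            exact ⟨t, Finset.mem_erase.2 ⟨htk₁, htK⟩, rfl⟩
          have hqt : q t.1 = αs t.1 - 1 := hinf_diag M hMne hMJs t.1 htM
          have hpt : αs t.1 ≤ u k₁.1 t.1 := by
            refine huge k₁.1 hk₁Js t.1 htj (fun hc => htk₁ (Subtype.ext hc))
          have hd : u k₁.1 t.1 ≠ q t.1 := by omega
          show γ t.1 = xs t.1
          rw [heq hd, hqt, hxsd _ htJs]
          exact min_eq_right (by omega)
      · intro t htK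
        by_cases htj : t.1 = j
        · show xs t.1 < γ t.1
          rw [htj, hxsj]
          exact hγj
        · have htJs : t.1 ∈ Js := hmemJs t htj
          have htk₁ : t ≠ k₁ := fun hc => htK (by rw [hc]; exact hk₁)
          have htM : t.1 ∉ M := by
            rw [hMdef, Finset.mem_image]
            rintro ⟨s, hs, hseq⟩
            exact htK (by rw [← Subtype.ext hseq]; exact Finset.mem_of_mem_erase hs)
          obtain ⟨hmin2, -⟩ := hγrest t.1 htj
          have h1 : αs t.1 ≤ u k₁.1 t.1 :=
            huge k₁.1 hk₁Js t.1 htj (fun hc => htk₁ (Subtype.ext hc))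
          have h2 : αs t.1 ≤ q t.1 := hinf_ge M hMne hMJs t.1 htj htM
          have h3 := hxsd t.1 htJs
          show xs t.1 < γ t.1
          have h4 := le_trans (le_min h1 h2) hmin2
          omega
  refine ⟨J, hssub, fun k => xs k.1, ⟨⟨⟨xs, hxsE, rfl⟩, hmax⟩, hrel⟩, hxsj, ?_⟩
  intro i hi hij
  have hiJs : i ∈ Js := hmemJs ⟨i, hi⟩ hij
  have h1 := hxsd i hiJs
  have h2 : αs i ≤ α i := hαsα i
  show xs i < α i
  rw [h1]
  linarith
end
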